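/- Let n ≥ 3, 0 < q < 1/(n−1), and let u be a positive C³ function on ℝⁿ satisfying −Δu = u^{2^*(q)−1}‖∇u‖^q on ℝⁿ. Define l = u^{−2_*(q)} ‖∇u‖^{2−q} + ((2−q)/2^*(q)) u^{(2−q)/((n−2)(1−q))}. Then at every point where ∇u ≠ 0, l is differentiable and its partial derivatives satisfy ∂ⱼ l = (2−q) u^{−2_*(q)} ‖∇u‖^{−q} (E·∇u)_j for every j. -/

import Mathlib

/-!
Write `l = u^{-2_*} g^{(2-q)/2} + c u^{2^* - 2_*}` with `g = ‖∇u‖²`, since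
`2^* - 2_* = (2-q)/((n-2)(1-q))`, and differentiate termwise. Contracting `E` with `∇u` gives
`(E·∇u)_j = ½ ∂ⱼg - ((n-1)/(n-2)) (g/u) ∂ⱼu - Δu/(n-(n-1)q) ∂ⱼu`: the `Δu/‖∇u‖²` term of `E`
is what makes the two Laplacian terms merge. Multiplied by `(2-q) u^{-2_*} g^{-q/2}`, the first
two terms give `∂ⱼ` of the first summand of `l`, and by the equation `-Δu = u^{2^*-1} g^{q/2}`
the last one gives `∂ⱼ` of the second summand, because `((2-q)/2^*) (2^* - 2_*) = (2-q)/(n-(n-1)q)`.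
-/

open MeasureTheory

noncomputable section

/-- The `i`-th partial derivative of `g : ℝⁿ → ℝ`. -/
def pd (n : ℕ) (i : Fin n) (g : EuclideanSpace ℝ (Fin n) → ℝ)
    (x : EuclideanSpace ℝ (Fin n)) : ℝ :=
  fderiv ℝ g x (EuclideanSpace.single i (1 : ℝ))

/-- The squared Euclidean norm of the gradient of `g`. -/
def gsq (n : ℕ) (g : EuclideanSpace ℝ (Fin n) → ℝ)
    (x : EuclideanSpace ℝ (Fin n)) : ℝ :=
  ∑ i, (pd n i g x) ^ 2

/-- The Euclidean norm of the gradient of `g`. -/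
def gnorm (n : ℕ) (g : EuclideanSpace ℝ (Fin n) → ℝ)
    (x : EuclideanSpace ℝ (Fin n)) : ℝ :=
  Real.sqrt (gsq n g x)

/-- The Laplacian of `g` (trace of the Hessian). -/
def lap (n : ℕ) (g : EuclideanSpace ℝ (Fin n) → ℝ)
    (x : EuclideanSpace ℝ (Fin n)) : ℝ :=
  ∑ i, pd n i (pd n i g) x

/-- The second critical exponent `2^*(q) = ((2-q)/(n-2))(n + q/(1-q))`. -/
def twoStar (n : ℕ) (q : ℝ) : ℝ :=
  (2 - q) / ((n : ℝ) - 2) * ((n : ℝ) + q / (1 - q))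

/-- The invariant tensor for the second critical equation. -/
def Ecrit (n : ℕ) (q : ℝ) (u : EuclideanSpace ℝ (Fin n) → ℝ)
    (x : EuclideanSpace ℝ (Fin n)) (i j : Fin n) : ℝ :=
  pd n i (pd n j u) x
    - (n : ℝ) / (((n : ℝ) - 2) * u x) * (pd n i u x * pd n j u x)
    - q / ((n : ℝ) - ((n : ℝ) - 1) * q) * (lap n u x / gsq n u x)
        * (pd n i u x * pd n j u x)
    - ((1 - q) / ((n : ℝ) - ((n : ℝ) - 1) * q) * lap n u x
        - gsq n u x / (((n : ℝ) - 2) * u x)) * (if i = j then (1 : ℝ) else 0)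

/-- The first critical exponent `2_*(q) = ((2-q)/(n-2))(n-1)`. -/
def twoLow (n : ℕ) (q : ℝ) : ℝ := (2 - q) / ((n : ℝ) - 2) * ((n : ℝ) - 1)

/-- The pseudo-invariant function
`l = u^{-2_*(q)}|∇u|^{2-q} + ((2-q)/2^*(q)) u^{(2-q)/((n-2)(1-q))}`. -/
def lfun (n : ℕ) (q : ℝ) (u : EuclideanSpace ℝ (Fin n) → ℝ)
    (x : EuclideanSpace ℝ (Fin n)) : ℝ :=
  u x ^ (-twoLow n q) * gnorm n u x ^ (2 - q)
    + (2 - q) / twoStar n q * u x ^ ((2 - q) / (((n : ℝ) - 2) * (1 - q)))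

section PartialDerivatives

variable {n : ℕ} {f g : EuclideanSpace ℝ (Fin n) → ℝ} {x : EuclideanSpace ℝ (Fin n)}

lemma pd_add (hf : DifferentiableAt ℝ f x) (hg : DifferentiableAt ℝ g x) (j : Fin n) :
    pd n j (fun y => f y + g y) x = pd n j f x + pd n j g x := by
  simp only [pd, fderiv_fun_add hf hg, _root_.add_apply]

lemma pd_mul (hf : DifferentiableAt ℝ f x) (hg : DifferentiableAt ℝ g x) (j : Fin n) :
    pd n j (fun y => f y * g y) x = f x * pd n j g x + g x * pd n j f x := by
  simp only [pd, fderiv_fun_mul hf hg, _root_.add_apply, _root_.smul_apply, smul_eq_mul]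

lemma pd_const_mul (hf : DifferentiableAt ℝ f x) (c : ℝ) (j : Fin n) :
    pd n j (fun y => c * f y) x = c * pd n j f x := by
  simp only [pd, fderiv_const_mul hf, _root_.smul_apply, smul_eq_mul]

lemma pd_rpow_const (hf : DifferentiableAt ℝ f x) (hfx : f x ≠ 0) (p : ℝ) (j : Fin n) :
    pd n j (fun y => f y ^ p) x = p * f x ^ (p - 1) * pd n j f x := by
  simp only [pd, (hf.hasFDerivAt.rpow_const (Or.inl hfx)).fderiv, _root_.smul_apply, smul_eq_mul]

end PartialDerivatives

section Gradient

variable {n : ℕ} {u : EuclideanSpace ℝ (Fin n) → ℝ} {x : EuclideanSpace ℝ (Fin n)}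

lemma contDiff_pd (i : Fin n) {k : ℕ} (hu : ContDiff ℝ (k + 1) u) : ContDiff ℝ k (pd n i u) :=
  (hu.fderiv_right le_rfl).clm_apply contDiff_const

lemma pd_pd_eq_fderiv_fderiv (hu : ContDiff ℝ 2 u) (i j : Fin n) :
    pd n i (pd n j u) x
      = fderiv ℝ (fderiv ℝ u) x (EuclideanSpace.single i 1) (EuclideanSpace.single j 1) := by
  have hd : DifferentiableAt ℝ (fderiv ℝ u) x :=
    ((hu.fderiv_right (m := 1) le_rfl).differentiable one_ne_zero).differentiableAt
  change fderiv ℝ (fun y => fderiv ℝ u y (EuclideanSpace.single j 1)) x _ = _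
  rw [fderiv_clm_apply hd (differentiableAt_const _)]
  simp

lemma pd_comm (hu : ContDiff ℝ 2 u) (i j : Fin n) :
    pd n i (pd n j u) x = pd n j (pd n i u) x := by
  rw [pd_pd_eq_fderiv_fderiv hu, pd_pd_eq_fderiv_fderiv hu,
    hu.contDiffAt.isSymmSndFDerivAt (by simp)]

lemma gsq_nonneg : 0 ≤ gsq n u x :=
  Finset.sum_nonneg fun _ _ => sq_nonneg _

lemma gnorm_rpow (s : ℝ) : gnorm n u x ^ s = gsq n u x ^ (s / 2) := by
  rw [gnorm, Real.sqrt_eq_rpow, ← Real.rpow_mul gsq_nonneg, one_div_mul_eq_div]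

lemma hasFDerivAt_gsq (hu : ContDiff ℝ 2 u) :
    HasFDerivAt (gsq n u) (∑ i, (2 * pd n i u x) • fderiv ℝ (pd n i u) x) x := by
  refine HasFDerivAt.fun_sum fun i _ => ?_
  have hd := ((contDiff_pd i hu).differentiable one_ne_zero x).hasFDerivAt
  simpa only [pow_two, two_mul, add_smul] using hd.fun_mul hd

lemma pd_gsq (hu : ContDiff ℝ 2 u) (j : Fin n) :
    pd n j (gsq n u) x = 2 * ∑ i, pd n i (pd n j u) x * pd n i u x := by
  rw [pd, (hasFDerivAt_gsq hu).fderiv, Finset.mul_sum]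
  simp only [_root_.sum_apply, _root_.smul_apply, smul_eq_mul]
  exact Finset.sum_congr rfl fun i _ => by rw [← pd, pd_comm hu]; ring

end Gradient

section PseudoInvariant

variable {n : ℕ} {q : ℝ} {u : EuclideanSpace ℝ (Fin n) → ℝ} {x : EuclideanSpace ℝ (Fin n)}

lemma twoStar_sub_twoLow (hq : q ≠ 1) :
    twoStar n q - twoLow n q = (2 - q) / (((n : ℝ) - 2) * (1 - q)) := by
  have : 1 - q ≠ 0 := sub_ne_zero.mpr hq.symm
  rw [twoStar, twoLow]
  field_simp
  ring

lemma two_sub_div_twoStar (hn : 2 < n) (hq : q < 1) :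
    (2 - q) / twoStar n q * (twoStar n q - twoLow n q) = (2 - q) / (n - (n - 1) * q) := by
  have hn' : (2 : ℝ) < n := by exact_mod_cast hn
  have hn2 : (n : ℝ) - 2 ≠ 0 := by linarith
  have h1q : 1 - q ≠ 0 := by linarith
  have h2q : 2 - q ≠ 0 := by linarith
  rw [twoStar_sub_twoLow hq.ne, twoStar]
  field_simp
  ring

lemma lfun_eq_rpow_gsq (n : ℕ) (q : ℝ) (u : EuclideanSpace ℝ (Fin n) → ℝ) :
    lfun n q u = fun y => u y ^ (-twoLow n q) * gsq n u y ^ ((2 - q) / 2)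
      + (2 - q) / twoStar n q * u y ^ ((2 - q) / (((n : ℝ) - 2) * (1 - q))) := by
  funext y
  rw [lfun, gnorm_rpow]

lemma differentiableAt_lfun (hu : ContDiff ℝ 2 u) (hux : u x ≠ 0) (hg : gsq n u x ≠ 0) :
    DifferentiableAt ℝ (lfun n q u) x := by
  have hud : DifferentiableAt ℝ u x := hu.differentiable two_ne_zero x
  have hgd : DifferentiableAt ℝ (gsq n u) x := (hasFDerivAt_gsq hu).differentiableAt
  rw [lfun_eq_rpow_gsq]
  exact ((hud.rpow_const (Or.inl hux)).mul (hgd.rpow_const (Or.inl hg))).add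
    ((hud.rpow_const (Or.inl hux)).const_mul _)

lemma pd_lfun (hn : 2 < n) (hq : q < 1) (hu : ContDiff ℝ 2 u) (hux : 0 < u x)
    (hg : 0 < gsq n u x) (j : Fin n) :
    pd n j (lfun n q u) x = u x ^ (-twoLow n q) *
      (gsq n u x ^ (-q / 2) * ((2 - q) / 2 * pd n j (gsq n u) x
          - twoLow n q * (gsq n u x / u x) * pd n j u x)
        + (2 - q) / (n - (n - 1) * q) * u x ^ (twoStar n q - 1) * pd n j u x) := by
  have hud : DifferentiableAt ℝ u x := hu.differentiable two_ne_zero x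
  have hgd : DifferentiableAt ℝ (gsq n u) x := (hasFDerivAt_gsq hu).differentiableAt
  have hua (p : ℝ) := hud.rpow_const (p := p) (Or.inl hux.ne')
  have hga (p : ℝ) := hgd.rpow_const (p := p) (Or.inl hg.ne')
  rw [lfun_eq_rpow_gsq, pd_add ((hua _).fun_mul (hga _)) ((hua _).const_mul _),
    pd_mul (hua _) (hga _), pd_const_mul (hua _), pd_rpow_const hud hux.ne',
    pd_rpow_const hgd hg.ne', pd_rpow_const hud hux.ne', ← twoStar_sub_twoLow hq.ne,
    Real.rpow_sub_one hux.ne', show (2 - q) / 2 - 1 = -q / 2 by ring,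
    show (2 - q) / 2 = 1 + -q / 2 by ring, Real.rpow_add hg, Real.rpow_one,
    show twoStar n q - twoLow n q - 1 = -twoLow n q + (twoStar n q - 1) by ring,
    Real.rpow_add hux]
  linear_combination (u x ^ (-twoLow n q) * u x ^ (twoStar n q - 1) * pd n j u x)
    * two_sub_div_twoStar hn hq

end PseudoInvariant

lemma sum_Ecrit_mul_pd {n : ℕ} (q : ℝ) {u : EuclideanSpace ℝ (Fin n) → ℝ}
    {x : EuclideanSpace ℝ (Fin n)} (hg : gsq n u x ≠ 0) (j : Fin n) :
    ∑ i, Ecrit n q u x i j * pd n i u x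
      = ∑ i, pd n i (pd n j u) x * pd n i u x
        - (n - 1) / (n - 2) * (gsq n u x / u x) * pd n j u x
        - lap n u x / (n - (n - 1) * q) * pd n j u x := by
  set c₁ := (n : ℝ) / ((n - 2) * u x) + q / (n - (n - 1) * q) * (lap n u x / gsq n u x)
  set c₂ := (1 - q) / (n - (n - 1) * q) * lap n u x - gsq n u x / ((n - 2) * u x)
  have hterm (i : Fin n) : Ecrit n q u x i j * pd n i u x
      = pd n i (pd n j u) x * pd n i u x - c₁ * pd n j u x * pd n i u x ^ 2
        - c₂ * (if i = j then pd n i u x else 0) := by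
    simp only [Ecrit, c₁, c₂]
    split_ifs <;> ring
  simp only [hterm, Finset.sum_sub_distrib, ← Finset.mul_sum, Finset.sum_ite_eq',
    Finset.mem_univ, if_true]
  rw [← gsq]
  simp only [c₁, c₂]
  field_simp
  ring

theorem stmt_12_general (n : ℕ) (hn : 3 ≤ n) (q : ℝ)
    (hq1 : q < 1 / ((n : ℝ) - 1))
    (u : EuclideanSpace ℝ (Fin n) → ℝ) (hu : ContDiff ℝ 3 u) (hupos : ∀ x, 0 < u x)
    (heq : ∀ x, -lap n u x = u x ^ (twoStar n q - 1) * gnorm n u x ^ q) :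
    ∀ x, gsq n u x ≠ 0 →
      DifferentiableAt ℝ (lfun n q u) x ∧
        ∀ j, pd n j (lfun n q u) x
          = (2 - q) * u x ^ (-twoLow n q) * gnorm n u x ^ (-q)
              * ∑ i, Ecrit n q u x i j * pd n i u x := by
  intro x hg
  have hu2 : ContDiff ℝ 2 u := hu.of_le (by norm_num)
  have hn2 : 2 < n := by omega
  have hn3 : (3 : ℝ) ≤ n := by exact_mod_cast hn
  have hq : q < 1 := hq1.trans_le ((div_le_one (by linarith)).mpr (by linarith))
  refine ⟨differentiableAt_lfun hu2 (hupos x).ne' hg, fun j => ?_⟩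
  have hlap : lap n u x = -(u x ^ (twoStar n q - 1) * gsq n u x ^ (q / 2)) := by
    rw [← gnorm_rpow, ← heq x, neg_neg]
  have hgpos : 0 < gsq n u x := gsq_nonneg.lt_of_ne' hg
  rw [pd_lfun hn2 hq hu2 (hupos x) hgpos, pd_gsq hu2, sum_Ecrit_mul_pd q hg, gnorm_rpow, hlap,
    neg_div, Real.rpow_neg hgpos.le, twoLow]
  field_simp
  ring

/-- At every point where `∇u ≠ 0`, the pseudo-invariant function `l` is
differentiable and `∂ⱼl = (2-q) u^{-2_*(q)} |∇u|^{-q} (E·∇u)_j`. -/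
theorem stmt_12 (n : ℕ) (hn : 3 ≤ n) (q : ℝ) (hq0 : 0 < q)
    (hq1 : q < 1 / ((n : ℝ) - 1))
    (u : EuclideanSpace ℝ (Fin n) → ℝ) (hu : ContDiff ℝ 3 u) (hupos : ∀ x, 0 < u x)
    (heq : ∀ x, -lap n u x = u x ^ (twoStar n q - 1) * gnorm n u x ^ q) :
    ∀ x, gsq n u x ≠ 0 →
      DifferentiableAt ℝ (lfun n q u) x ∧
        ∀ j, pd n j (lfun n q u) x
          = (2 - q) * u x ^ (-twoLow n q) * gnorm n u x ^ (-q)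
              * ∑ i, Ecrit n q u x i j * pd n i u x :=
  stmt_12_general n hn q hq1 u hu hupos heq
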